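/- arXiv:2301.10073 — 2 statements merged into one kernel-verified Lean document; each statement's English description precedes it below -/
import Mathlib

section
/- Let B be a C*-algebra and A ⊆ B a closed *-subalgebra satisfying the ideal intersection property and such that J ∩ A is B-invariant for every ideal J of B (axiom (inv)). Then for every closed two-sided ideal J of B: (i) Ann_B(J ∩ A) = Ann_B(J), and (ii) Ann_A(J ∩ A) = Ann_B(J) ∩ A. -/
open Pointwise

variable {B : Type*} [NonUnitalCStarAlgebra B]

/-- Closed linear span of a subset of `B`. -/
def clSpan (S : Set B) : Set B := closure (Submodule.span ℂ S : Set B)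

/-- `S` is `B`-invariant if `[SB] = [BS]`. -/
def BInvariant (S : Set B) : Prop :=
  clSpan (S * (Set.univ : Set B)) = clSpan ((Set.univ : Set B) * S)

/-- The closed two-sided ideal of `B` generated by `S`, namely `[BSB]`. -/
def idealGen (S : Set B) : Set B :=
  clSpan ((Set.univ : Set B) * S * (Set.univ : Set B))

/-- Two-sided annihilator of `S` computed in `B`. -/
def annB (S : Set B) : Set B := {x | ∀ s ∈ S, x * s = 0 ∧ s * x = 0}

/-- Two-sided annihilator of `S` computed inside the subset `A ⊆ B`. -/
def annIn (A S : Set B) : Set B := {x ∈ A | ∀ s ∈ S, x * s = 0 ∧ s * x = 0}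

/-- A closed *-subalgebra of `B`, regarded as a subset. -/
structure ClosedStarSubalgebra (A : Set B) : Prop where
  isClosed : IsClosed A
  zero_mem : (0 : B) ∈ A
  add_mem : ∀ ⦃x y : B⦄, x ∈ A → y ∈ A → x + y ∈ A
  smul_mem : ∀ (c : ℂ) ⦃x : B⦄, x ∈ A → c • x ∈ A
  mul_mem : ∀ ⦃x y : B⦄, x ∈ A → y ∈ A → x * y ∈ A
  star_mem : ∀ ⦃x : B⦄, x ∈ A → star x ∈ A

/-- A norm-closed two-sided ideal of `B`. -/
structure ClosedTwoSidedIdeal (J : Set B) : Prop where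
  isClosed : IsClosed J
  zero_mem : (0 : B) ∈ J
  add_mem : ∀ ⦃x y : B⦄, x ∈ J → y ∈ J → x + y ∈ J
  smul_mem : ∀ (c : ℂ) ⦃x : B⦄, x ∈ J → c • x ∈ J
  mul_mem_left : ∀ (a : B) ⦃x : B⦄, x ∈ J → a * x ∈ J
  mul_mem_right : ∀ (a : B) ⦃x : B⦄, x ∈ J → x * a ∈ J

/-- A norm-closed two-sided ideal of the subalgebra `A ⊆ B`. -/
structure IdealOf (A J : Set B) : Prop where
  subset : J ⊆ A
  isClosed : IsClosed J
  zero_mem : (0 : B) ∈ J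
  add_mem : ∀ ⦃x y : B⦄, x ∈ J → y ∈ J → x + y ∈ J
  smul_mem : ∀ (c : ℂ) ⦃x : B⦄, x ∈ J → c • x ∈ J
  mul_mem_left : ∀ ⦃a : B⦄, a ∈ A → ∀ ⦃x : B⦄, x ∈ J → a * x ∈ J
  mul_mem_right : ∀ ⦃a : B⦄, a ∈ A → ∀ ⦃x : B⦄, x ∈ J → x * a ∈ J

/-- The ideal intersection property: every nonzero closed two-sided ideal of `B`
meets `A` nontrivially. -/
def IdealIntersectionProperty (A : Set B) : Prop :=
  ∀ J : Set B, ClosedTwoSidedIdeal J → J ≠ {0} → J ∩ A ≠ {0}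

/-- Axiom (inv): `J ∩ A` is `B`-invariant for every closed two-sided ideal `J` of `B`. -/
def AxiomInv (A : Set B) : Prop :=
  ∀ J : Set B, ClosedTwoSidedIdeal J → BInvariant (J ∩ A)

/-- A regular ideal of `B`. -/
def RegularIdealB (J : Set B) : Prop :=
  ClosedTwoSidedIdeal J ∧ annB (annB J) = J

/-- A regular ideal of the subalgebra `A`. -/
def RegularIdealIn (A I : Set B) : Prop :=
  IdealOf A I ∧ annIn A (annIn A I) = I

/-- A normalizer of `A` in `B`. -/
def IsNormalizer (A : Set B) (n : B) : Prop :=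
  (∀ a ∈ A, star n * a * n ∈ A) ∧ (∀ a ∈ A, n * a * star n ∈ A)

/-- `A` contains an approximate unit for `B`. -/
def ContainsApproxUnit (A : Set B) : Prop :=
  ∃ (ι : Type) (l : Filter ι) (e : ι → B), l.NeBot ∧ (∀ i, e i ∈ A) ∧
    ∀ b : B, Filter.Tendsto (fun i => e i * b) l (nhds b) ∧
      Filter.Tendsto (fun i => b * e i) l (nhds b)

/-- `A` is a regular subalgebra of `B`: the normalizers span a dense subspace of
`B` and `A` contains an approximate unit for `B`. -/
def RegularSubalgebra (A : Set B) : Prop :=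
  ClosedStarSubalgebra A ∧ clSpan {n : B | IsNormalizer A n} = Set.univ ∧
    ContainsApproxUnit A

/-- If `x` right-annihilates every element of `S`, it right-annihilates `clSpan S`. -/
lemma clSpan_mul_right_zero {x : B} {S : Set B} (h : ∀ s ∈ S, s * x = 0) :
    ∀ y ∈ clSpan S, y * x = 0 := by
  have hcl : IsClosed {y : B | y * x = 0} :=
    isClosed_eq (continuous_mul_right x) continuous_const
  have hspan : (Submodule.span ℂ S : Set B) ⊆ {y | y * x = 0} := by
    intro y hy
    induction hy using Submodule.span_induction with
    | mem s hs => exact h s hs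
    | zero => simp
    | add a b _ _ ha hb =>
        simp only [Set.mem_setOf_eq] at ha hb ⊢; rw [add_mul, ha, hb, add_zero]
    | smul c a _ ha =>
        simp only [Set.mem_setOf_eq] at ha ⊢; rw [smul_mul_assoc, ha, smul_zero]
  intro y hy
  exact closure_minimal hspan hcl hy

/-- If `x` left-annihilates every element of `S`, it left-annihilates `clSpan S`. -/
lemma clSpan_mul_left_zero {x : B} {S : Set B} (h : ∀ s ∈ S, x * s = 0) :
    ∀ y ∈ clSpan S, x * y = 0 := by
  have hcl : IsClosed {y : B | x * y = 0} :=
    isClosed_eq (continuous_mul_left x) continuous_const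
  have hspan : (Submodule.span ℂ S : Set B) ⊆ {y | x * y = 0} := by
    intro y hy
    induction hy using Submodule.span_induction with
    | mem s hs => exact h s hs
    | zero => simp
    | add a b _ _ ha hb =>
        simp only [Set.mem_setOf_eq] at ha hb ⊢; rw [mul_add, ha, hb, add_zero]
    | smul c a _ ha =>
        simp only [Set.mem_setOf_eq] at ha ⊢; rw [mul_smul_comm, ha, smul_zero]
  intro y hy
  exact closure_minimal hspan hcl hy

lemma annB_isClosed (S : Set B) : IsClosed (annB S) := by
  have : annB S = ⋂ s ∈ S, ({x : B | x * s = 0} ∩ {x : B | s * x = 0}) := by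
    ext x; simp [annB, Set.mem_iInter, forall_and]
  rw [this]
  exact isClosed_biInter fun s _ =>
    (isClosed_eq (continuous_mul_right s) continuous_const).inter
      (isClosed_eq (continuous_mul_left s) continuous_const)

/-- The annihilator of a `B`-invariant set is a closed two-sided ideal. -/
lemma annB_closedTwoSidedIdeal {S : Set B} (hS : BInvariant S) :
    ClosedTwoSidedIdeal (annB S) := by
  -- x ∈ annB S right-annihilates everything in clSpan (univ * S)
  have hright : ∀ x ∈ annB S, ∀ y ∈ clSpan ((Set.univ : Set B) * S), y * x = 0 := by
    intro x hx
    refine clSpan_mul_right_zero ?_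
    rintro s ⟨b, -, t, ht, rfl⟩
    rw [mul_assoc, (hx t ht).2, mul_zero]
  have hleft : ∀ x ∈ annB S, ∀ y ∈ clSpan (S * (Set.univ : Set B)), x * y = 0 := by
    intro x hx
    refine clSpan_mul_left_zero ?_
    rintro s ⟨t, ht, b, -, rfl⟩
    rw [← mul_assoc, (hx t ht).1, zero_mul]
  have hmemSB : ∀ (s : B), s ∈ S → ∀ b : B, s * b ∈ clSpan (S * (Set.univ : Set B)) := by
    intro s hs b
    exact subset_closure (Submodule.subset_span (Set.mul_mem_mul hs (Set.mem_univ b)))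
  have hmemBS : ∀ (s : B), s ∈ S → ∀ b : B, b * s ∈ clSpan ((Set.univ : Set B) * S) := by
    intro s hs b
    exact subset_closure (Submodule.subset_span (Set.mul_mem_mul (Set.mem_univ b) hs))
  refine ⟨annB_isClosed S, ?_, ?_, ?_, ?_, ?_⟩
  · intro s _; simp
  · intro x y hx hy s hs
    constructor
    · rw [add_mul, (hx s hs).1, (hy s hs).1, add_zero]
    · rw [mul_add, (hx s hs).2, (hy s hs).2, add_zero]
  · intro c x hx s hs
    constructor
    · rw [smul_mul_assoc, (hx s hs).1, smul_zero]
    · rw [mul_smul_comm, (hx s hs).2, smul_zero]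
  · -- left multiplication: b * x
    intro b x hx s hs
    constructor
    · rw [mul_assoc, (hx s hs).1, mul_zero]
    · have : s * b ∈ clSpan ((Set.univ : Set B) * S) := by
        rw [← hS]; exact hmemSB s hs b
      have := hright x hx _ this
      rwa [mul_assoc] at this
  · -- right multiplication: x * b
    intro b x hx s hs
    constructor
    · have : b * s ∈ clSpan (S * (Set.univ : Set B)) := by
        rw [hS]; exact hmemBS s hs b
      have := hleft x hx _ this
      rwa [← mul_assoc] at this
    · rw [← mul_assoc, (hx s hs).2, zero_mul]

/-- Under the ideal intersection property and axiom (inv), for every closed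
two-sided ideal `J` of `B`: (i) `Ann_B(J ∩ A) = Ann_B(J)` and
(ii) `Ann_A(J ∩ A) = Ann_B(J) ∩ A`. -/
theorem stmt11 (A : Set B) (hA : ClosedStarSubalgebra A)
    (hiip : IdealIntersectionProperty A) (hinv : AxiomInv A) :
    ∀ J : Set B, ClosedTwoSidedIdeal J →
      annB (J ∩ A) = annB J ∧ annIn A (J ∩ A) = annB J ∩ A := by
  intro J hJ
  set S : Set B := J ∩ A with hSdef
  have hSinv : BInvariant S := hinv J hJ
  have hD : ClosedTwoSidedIdeal (annB S) := annB_closedTwoSidedIdeal hSinv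
  -- K = J ∩ annB S is a closed two-sided ideal
  have hK : ClosedTwoSidedIdeal (J ∩ annB S) := by
    refine ⟨hJ.isClosed.inter hD.isClosed, ⟨hJ.zero_mem, hD.zero_mem⟩, ?_, ?_, ?_, ?_⟩
    · exact fun x y hx hy => ⟨hJ.add_mem hx.1 hy.1, hD.add_mem hx.2 hy.2⟩
    · exact fun c x hx => ⟨hJ.smul_mem c hx.1, hD.smul_mem c hx.2⟩
    · exact fun a x hx => ⟨hJ.mul_mem_left a hx.1, hD.mul_mem_left a hx.2⟩
    · exact fun a x hx => ⟨hJ.mul_mem_right a hx.1, hD.mul_mem_right a hx.2⟩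
  -- (J ∩ annB S) ∩ A = {0}
  have hKA : (J ∩ annB S) ∩ A = {0} := by
    apply Set.eq_singleton_iff_unique_mem.mpr
    refine ⟨⟨⟨hJ.zero_mem, hD.zero_mem⟩, hA.zero_mem⟩, ?_⟩
    rintro a ⟨⟨haJ, haD⟩, haA⟩
    have haS : a ∈ S := ⟨haJ, haA⟩
    -- a * star a ∈ clSpan (S * univ) = clSpan (univ * S), which is right-annihilated by a
    have ht : a * star a ∈ clSpan ((Set.univ : Set B) * S) := by
      rw [← hSinv]
      exact subset_closure (Submodule.subset_span
        (Set.mul_mem_mul haS (Set.mem_univ (star a))))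
    have hann : (a * star a) * a = 0 := by
      refine clSpan_mul_right_zero ?_ _ ht
      rintro s ⟨b, -, t, htS, rfl⟩
      rw [mul_assoc, (haD t htS).2, mul_zero]
    -- hence (star a * a) * (star a * a) = 0
    have hc : (star a * a) * (star a * a) = 0 := by
      calc (star a * a) * (star a * a) = star a * ((a * star a) * a) := by
            simp only [mul_assoc]
        _ = 0 := by rw [hann, mul_zero]
    have hcsa : star (star a * a) = star a * a := by simp [star_mul, mul_assoc]
    have hc0 : star a * a = 0 := by
      have hnorm : ‖star a * a‖ * ‖star a * a‖ = 0 := by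
        rw [← CStarRing.norm_star_mul_self, hcsa, hc, norm_zero]
      have : ‖star a * a‖ = 0 := by
        rcases mul_self_eq_zero.mp hnorm with h
        exact h
      exact norm_eq_zero.mp this
    have : ‖a‖ * ‖a‖ = 0 := by rw [← CStarRing.norm_star_mul_self, hc0, norm_zero]
    exact norm_eq_zero.mp (mul_self_eq_zero.mp this)
  -- hence K = {0}
  have hK0 : J ∩ annB S = {0} := by
    by_contra h
    exact hiip _ hK h hKA
  -- (i): annB S = annB J
  have h1 : annB S = annB J := by
    apply Set.Subset.antisymm
    · intro x hx j hj
      constructor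
      · have hmem : x * j ∈ J ∩ annB S :=
          ⟨hJ.mul_mem_left x hj, hD.mul_mem_right j hx⟩
        rw [hK0] at hmem; exact hmem
      · have hmem : j * x ∈ J ∩ annB S :=
          ⟨hJ.mul_mem_right x hj, hD.mul_mem_left j hx⟩
        rw [hK0] at hmem; exact hmem
    · intro x hx s hs
      exact hx s hs.1
  refine ⟨h1, ?_⟩
  have h2 : annIn A S = annB S ∩ A := by
    ext x
    simp [annIn, annB, Set.mem_inter_iff, and_comm]
  rw [h2, h1]
end

section
/- Let A be a regular subalgebra of a C*-algebra B. Then A satisfies axiom (inv): for every closed two-sided ideal J of B, the ideal J ∩ A of A is B-invariant ([（J∩A)B] = [B(J∩A)]). -/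
open Pointwise

variable {B : Type*} [NonUnitalCStarAlgebra B]

/-!
Let `S = J ∩ A`. For `s ∈ S` and a normalizer `n`, the element `m = s n` has
`m⋆m = n⋆ (s⋆s) n ∈ S`, and every element `m` of a C⋆-algebra is a limit of elements
`m c (m⋆m)` (functional calculus applied to `m⋆m`). Hence `s n ∈ [BS]`, and since the
normalizers span a dense subspace, `sB ⊆ [BS]`, i.e. `[SB] ⊆ [BS]`. The reverse inclusion is
symmetric, using `n s (n s)⋆ = n (s s⋆) n⋆ ∈ S`.
-/

lemma clSpan_eq_topologicalClosure (S : Set B) :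
    clSpan S = ((Submodule.span ℂ S).topologicalClosure : Set B) :=
  (Submodule.topologicalClosure_coe _).symm

lemma isClosed_clSpan (S : Set B) : IsClosed (clSpan S) := isClosed_closure

lemma subset_clSpan (S : Set B) : S ⊆ clSpan S :=
  Submodule.subset_span.trans subset_closure

lemma clSpan_subset_clSpan {S T : Set B} (h : S ⊆ clSpan T) : clSpan S ⊆ clSpan T := by
  rw [clSpan_eq_topologicalClosure T] at h ⊢
  exact closure_minimal (Submodule.span_le.mpr h) (Submodule.isClosed_topologicalClosure _)

lemma map_mem_clSpan_of_clSpan_eq_univ {N S : Set B} (hN : clSpan N = Set.univ)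
    (L : B →L[ℂ] B) (h : ∀ n ∈ N, L n ∈ clSpan S) (b : B) : L b ∈ clSpan S := by
  have hT : N ⊆ (((Submodule.span ℂ S).topologicalClosure.comap (L : B →ₗ[ℂ] B)) : Set B) :=
    fun n hn => by simpa [clSpan_eq_topologicalClosure] using h n hn
  have hb : b ∈ clSpan N := hN ▸ Set.mem_univ b
  exact closure_minimal (Submodule.span_le.mpr hT)
    ((Submodule.isClosed_topologicalClosure _).preimage L.continuous) hb

lemma star_sub_mul_cfcₙ_mul_sub (m : B) {f : ℝ → ℝ} (hf : Continuous f) (hf0 : f 0 = 0) :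
    star (m - m * cfcₙ f (star m * m)) * (m - m * cfcₙ f (star m * m)) =
      cfcₙ (fun t => (1 - f t) * t * (1 - f t)) (star m * m) := by
  set a := star m * m
  set x := cfcₙ f a
  have hx : star x = x := (cfcₙ_predicate f a : IsSelfAdjoint x).star_eq
  have hy : cfcₙ (fun t => t * (1 - f t)) a = a - a * x := by
    rw [← cfcₙ_id' ℝ a, ← cfcₙ_mul (fun t => t) f a, ← cfcₙ_sub (fun t => t) (fun t => t * f t) a,
      cfcₙ_id' ℝ a]
    exact cfcₙ_congr fun t _ => by ring
  calc star (m - m * x) * (m - m * x) = (a - a * x) - x * (a - a * x) := by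
        simp only [star_sub, star_mul, hx, sub_mul, mul_sub, a, mul_assoc]; abel
    _ = cfcₙ (fun t => t * (1 - f t)) a - cfcₙ f a * cfcₙ (fun t => t * (1 - f t)) a := by rw [hy]
    _ = _ := by
      rw [← cfcₙ_mul f (fun t => t * (1 - f t)) a,
        ← cfcₙ_sub (fun t => t * (1 - f t)) (fun t => f t * (t * (1 - f t))) a]
      exact cfcₙ_congr fun t _ => by ring

lemma abs_one_sub_mul_mul_one_sub_le {K : ℝ} (hK : 0 < K) (t : ℝ) :
    |(1 - K ^ 2 * t ^ 2 / (1 + K ^ 2 * t ^ 2)) * t * (1 - K ^ 2 * t ^ 2 / (1 + K ^ 2 * t ^ 2))|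
      ≤ 1 / (2 * K) := by
  have hD : 0 < 1 + K ^ 2 * t ^ 2 := by positivity
  have h1 : (1 - K ^ 2 * t ^ 2 / (1 + K ^ 2 * t ^ 2)) * t * (1 - K ^ 2 * t ^ 2 / (1 + K ^ 2 * t ^ 2))
      = t / (1 + K ^ 2 * t ^ 2) ^ 2 := by
    field_simp; ring
  rw [h1, abs_div, abs_of_pos (pow_pos hD 2), div_le_div_iff₀ (by positivity) (by positivity)]
  have hAMGM : 2 * K * |t| ≤ 1 + K ^ 2 * t ^ 2 := by
    nlinarith [sq_nonneg (K * |t| - 1), sq_abs t]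
  nlinarith [mul_le_mul_of_nonneg_left hAMGM hD.le, sq_nonneg (K * t), abs_nonneg t]

/-- `f` approximates the indicator of `t ≠ 0` and factors as `q t · t`, so `m c (m⋆m) = m f(m⋆m)`
for `c = q(m⋆m)`, while `‖m - m f(m⋆m)‖² = ‖((1 - f)² · id)(m⋆m)‖ ≤ 1/(2K)`. -/
lemma mem_closure_range_mul_mul_star_mul_self (m : B) :
    m ∈ closure (Set.range fun c : B => m * c * (star m * m)) := by
  rw [Metric.mem_closure_iff]
  intro ε hε
  set K : ℝ := 1 / ε ^ 2
  have hK : 0 < K := by positivity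
  set f : ℝ → ℝ := fun t => K ^ 2 * t ^ 2 / (1 + K ^ 2 * t ^ 2)
  set q : ℝ → ℝ := fun t => K ^ 2 * t / (1 + K ^ 2 * t ^ 2)
  have hD : ∀ t : ℝ, 1 + K ^ 2 * t ^ 2 ≠ 0 := fun t => by positivity
  have hf : Continuous f := by fun_prop (disch := exact hD _)
  have hcfc : cfcₙ q (star m * m) * (star m * m) = cfcₙ f (star m * m) := by
    nth_rw 2 [← cfcₙ_id' ℝ (star m * m)]
    rw [← cfcₙ_mul q (fun t => t) (star m * m)]
    exact cfcₙ_congr fun t _ => by simp only [f, q]; ring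
  refine ⟨m * cfcₙ q (star m * m) * (star m * m), ⟨_, rfl⟩, ?_⟩
  have hsq : ‖m - m * cfcₙ f (star m * m)‖ ^ 2 ≤ 1 / (2 * K) := by
    rw [sq, ← CStarRing.norm_star_mul_self, star_sub_mul_cfcₙ_mul_sub m hf (by simp [f])]
    exact norm_cfcₙ_le fun t _ => abs_one_sub_mul_mul_one_sub_le hK t
  have hKε : 1 / (2 * K) < ε ^ 2 := by
    simp only [K]; field_simp; linarith [pow_pos hε 2]
  rw [dist_eq_norm, mul_assoc m, hcfc]
  exact lt_of_pow_lt_pow_left₀ 2 hε.le (hsq.trans_lt hKε)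

lemma mem_closure_range_mul_star_self_mul (m : B) :
    m ∈ closure (Set.range fun c : B => m * star m * c * m) := by
  simpa using map_mem_closure continuous_star (mem_closure_range_mul_mul_star_mul_self (star m))
    (by rintro _ ⟨c, rfl⟩; exact ⟨star c, by simp [mul_assoc]⟩)

lemma mem_clSpan_univ_mul_of_star_mul_self_mem {S : Set B} {m : B} (h : star m * m ∈ S) :
    m ∈ clSpan (Set.univ * S) := by
  refine closure_minimal ?_ (isClosed_clSpan _) (mem_closure_range_mul_mul_star_mul_self m)
  rintro _ ⟨c, rfl⟩
  exact subset_clSpan _ (Set.mul_mem_mul (Set.mem_univ _) h)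

lemma mem_clSpan_mul_univ_of_mul_star_self_mem {S : Set B} {m : B} (h : m * star m ∈ S) :
    m ∈ clSpan (S * Set.univ) := by
  refine closure_minimal ?_ (isClosed_clSpan _) (mem_closure_range_mul_star_self_mul m)
  rintro _ ⟨c, rfl⟩
  show m * star m * c * m ∈ _
  rw [mul_assoc]
  exact subset_clSpan _ (Set.mul_mem_mul h (Set.mem_univ _))

lemma bInvariant_of_clSpan_eq_univ {N S : Set B} (hN : clSpan N = Set.univ)
    (hright : ∀ s ∈ S, ∀ n ∈ N, star (s * n) * (s * n) ∈ S)
    (hleft : ∀ s ∈ S, ∀ n ∈ N, n * s * star (n * s) ∈ S) : BInvariant S := by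
  apply subset_antisymm <;> refine clSpan_subset_clSpan ?_
  · rintro _ ⟨s, hs, b, -, rfl⟩
    exact map_mem_clSpan_of_clSpan_eq_univ hN (ContinuousLinearMap.mul ℂ B s)
      (fun n hn => mem_clSpan_univ_mul_of_star_mul_self_mem (hright s hs n hn)) b
  · rintro _ ⟨b, -, s, hs, rfl⟩
    exact map_mem_clSpan_of_clSpan_eq_univ hN ((ContinuousLinearMap.mul ℂ B).flip s)
      (fun n hn => mem_clSpan_mul_univ_of_mul_star_self_mem (hleft s hs n hn)) b

lemma IsNormalizer.star_mul_self_mul_mem_inter {A J : Set B} {n s : B} (hn : IsNormalizer A n)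
    (hA : ClosedStarSubalgebra A) (hJ : ClosedTwoSidedIdeal J) (hs : s ∈ J ∩ A) :
    star (s * n) * (s * n) ∈ J ∩ A := by
  rw [show star (s * n) * (s * n) = star n * (star s * s) * n by simp [mul_assoc]]
  exact ⟨hJ.mul_mem_right _ (hJ.mul_mem_left _ (hJ.mul_mem_left _ hs.1)),
    hn.1 _ (hA.mul_mem (hA.star_mem hs.2) hs.2)⟩

lemma IsNormalizer.mul_mul_star_self_mem_inter {A J : Set B} {n s : B} (hn : IsNormalizer A n)
    (hA : ClosedStarSubalgebra A) (hJ : ClosedTwoSidedIdeal J) (hs : s ∈ J ∩ A) :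
    n * s * star (n * s) ∈ J ∩ A := by
  rw [show n * s * star (n * s) = n * (s * star s) * star n by simp [mul_assoc]]
  exact ⟨hJ.mul_mem_right _ (hJ.mul_mem_left _ (hJ.mul_mem_right _ hs.1)),
    hn.2 _ (hA.mul_mem hs.2 (hA.star_mem hs.2))⟩

/-- A regular subalgebra satisfies axiom (inv). -/
theorem stmt16 (A : Set B) (hreg : RegularSubalgebra A) :
    AxiomInv A := by
  obtain ⟨hA, hN, -⟩ := hreg
  intro J hJ
  exact bInvariant_of_clSpan_eq_univ hN
    (fun _ hs _ hn => hn.star_mul_self_mul_mem_inter hA hJ hs)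
    (fun _ hs _ hn => hn.mul_mul_star_self_mem_inter hA hJ hs)
end
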